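/- For every z ∈ E_{2m} with z_1 ≠ 0 there exist indices i, j, k ∈ {1, …, n} such that ∂h_{i j̄}/∂z_k (z) ≠ ∂h_{k j̄}/∂z_i (z) (Wirtinger derivatives); that is, the Wu metric h fails the Kähler symmetry condition at every point of the dense open set E_{2m} \ Z, so the Wu metric on E_{2m} is nowhere Kähler. -/

import Mathlib

/-!
Take `i = 2`, `j = 2`, `k = 1` (indices `1, 1, 0` here) and write `t = |z_1|²`, `s = |z_2|²`,
`A = 1 - |ẑ|²`, `P = A^(1/m)`. Restricted to a coordinate line, `h_{2 2̄}` is a real function of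
`t` and `h_{1 2̄} = g(A) z̄_1 z_2`, so the two Wirtinger derivatives are `z̄_1 ∂_t h_{2 2̄}` and
`z̄_1 (g - s g')`. Their difference is `(A + s)` times a positive multiple of
`m² t^(m-1) (P - t)² P^m - P (P^m - t^m)²`, and with `t = P e^(-2y)` this is a positive multiple
of `m² sinh² y - sinh² (m y)`, which is positive because `sinh (m y) < m sinh y` for `0 < m < 1`.
-/

open scoped ComplexOrder

noncomputable section

/-- The pseudo-egg `E_{2m} ⊆ ℂ^n`, `n = N + 2`, coordinates indexed by `Fin (N+2)`
with `z 0` playing the role of `z₁`. -/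
def E2m (N : ℕ) (m : ℝ) : Set (Fin (N + 2) → ℂ) :=
  {z | ‖z 0‖ ^ (2 * m) + ∑ j ∈ Finset.Ioi (0 : Fin (N + 2)), ‖z j‖ ^ 2 < 1}

/-- The entries `h_{i j̄}` of the Wu metric of `E_{2m}` (index `0` plays the role of `1`). -/
def hEnt (N : ℕ) (m : ℝ) (z : Fin (N + 2) → ℂ) (i j : Fin (N + 2)) : ℂ :=
  let A : ℝ := 1 - ∑ l ∈ Finset.Ioi (0 : Fin (N + 2)), ‖z l‖ ^ 2
  let B : ℝ := A ^ (1 / m)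
  let C : ℝ := (B - ‖z 0‖ ^ 2) ^ 2
  if i = 0 then
    if j = 0 then ((B / C : ℝ) : ℂ)
    else ((A ^ (-1 + 1 / m) / (m * C) : ℝ) : ℂ) * (starRingEnd ℂ) (z 0) * z j
  else if j = 0 then ((A ^ (-1 + 1 / m) / (m * C) : ℝ) : ℂ) * z 0 * (starRingEnd ℂ) (z i)
  else if i = j then
    ((A ^ (-2 + 1 / m) * ‖z 0‖ ^ 2 * ‖z i‖ ^ 2 / (m ^ 2 * C) +
      (A + ‖z i‖ ^ 2) / (A * (A - ‖z 0‖ ^ (2 * m))) : ℝ) : ℂ)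
  else
    ((A ^ (-2 + 1 / m) * ‖z 0‖ ^ 2 / (m ^ 2 * C) : ℝ) : ℂ) *
        (starRingEnd ℂ) (z i) * z j +
      ((1 / (A * (A - ‖z 0‖ ^ (2 * m))) : ℝ) : ℂ) * (starRingEnd ℂ) (z i) * z j

/-- Wirtinger derivative `∂f/∂z_k = (1/2)(∂f/∂x_k − i ∂f/∂y_k)`. -/
def wirt (N : ℕ) (f : (Fin (N + 2) → ℂ) → ℂ) (z : Fin (N + 2) → ℂ) (k : Fin (N + 2)) : ℂ :=
  (1 / 2) * (fderiv ℝ f z (Pi.single k 1) - Complex.I * fderiv ℝ f z (Pi.single k Complex.I))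

/-- Wirtinger derivative `∂f/∂z̄_k = (1/2)(∂f/∂x_k + i ∂f/∂y_k)`. -/
def wirtBar (N : ℕ) (f : (Fin (N + 2) → ℂ) → ℂ) (z : Fin (N + 2) → ℂ) (k : Fin (N + 2)) : ℂ :=
  (1 / 2) * (fderiv ℝ f z (Pi.single k 1) + Complex.I * fderiv ℝ f z (Pi.single k Complex.I))

open ComplexConjugate Real

theorem Real.sinh_mul_lt_mul_sinh {m y : ℝ} (hm0 : 0 < m) (hm1 : m < 1) (hy : 0 < y) :
    sinh (m * y) < m * sinh y := by
  set f : ℝ → ℝ := fun x => m * sinh x - sinh (m * x)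
  have hf : ∀ x, HasDerivAt f (m * cosh x - m * cosh (m * x)) x := fun x =>
    (((hasDerivAt_sinh x).const_mul m).sub ((hasDerivAt_id x).const_mul m).sinh).congr_deriv
      (by simp only [id, mul_one, mul_comm])
  have hmono : StrictMonoOn f (Set.Ici 0) := by
    refine strictMonoOn_of_deriv_pos (convex_Ici 0)
      (fun x _ => (hf x).continuousAt.continuousWithinAt) fun x hx => ?_
    rw [interior_Ici] at hx
    have : cosh (m * x) < cosh x := by
      rw [cosh_lt_cosh, abs_of_pos (mul_pos hm0 hx), abs_of_pos hx]
      nlinarith [hx.out]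
    rw [(hf x).deriv]
    nlinarith
  have := hmono (Set.mem_Ici.mpr le_rfl) hy.le hy
  simp only [f, mul_zero, sinh_zero, sub_zero] at this
  linarith

theorem Real.exp_sub_exp (x z : ℝ) :
    exp x - exp z = 2 * exp ((x + z) / 2) * sinh ((x - z) / 2) := by
  rw [sinh_eq, show ∀ c e f : ℝ, 2 * c * ((e - f) / 2) = c * e - c * f by intros; ring,
    ← exp_add, ← exp_add]
  ring_nf

/- With `t = exp b < P = exp a`, both sides are `4 exp (a + m a + m b)` times the squares of
`sinh (m (a - b) / 2)` and `m sinh ((a - b) / 2)` respectively. -/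
theorem Real.mul_rpow_sub_rpow_sq_lt {m t P : ℝ} (hm0 : 0 < m) (hm1 : m < 1) (ht : 0 < t)
    (htP : t < P) :
    P * (P ^ m - t ^ m) ^ 2 < m ^ 2 * t ^ (m - 1) * (P - t) ^ 2 * P ^ m := by
  obtain ⟨a, rfl⟩ : ∃ a, exp a = P := ⟨log P, exp_log (ht.trans htP)⟩
  obtain ⟨b, rfl⟩ : ∃ b, exp b = t := ⟨log t, exp_log ht⟩
  have hy : 0 < (a - b) / 2 := by rw [exp_lt_exp] at htP; linarith
  have hsinh : sinh (m * ((a - b) / 2)) ^ 2 < (m * sinh ((a - b) / 2)) ^ 2 := by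
    have h0 : 0 < sinh (m * ((a - b) / 2)) := sinh_pos_iff.mpr (mul_pos hm0 hy)
    exact pow_lt_pow_left₀ (sinh_mul_lt_mul_sinh hm0 hm1 hy) h0.le two_ne_zero
  have hL : exp a * exp ((a * m + b * m) / 2) ^ 2 = exp (a + m * a + m * b) := by
    rw [← exp_nat_mul, ← exp_add]; congr 1; push_cast; ring
  have hR : exp (b * (m - 1)) * exp ((a + b) / 2) ^ 2 * exp (a * m) =
      exp (a + m * a + m * b) := by
    rw [← exp_nat_mul, ← exp_add, ← exp_add]; congr 1; push_cast; ring
  simp only [← exp_mul, exp_sub_exp]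
  calc exp a * (2 * exp ((a * m + b * m) / 2) * sinh ((a * m - b * m) / 2)) ^ 2
      = 4 * exp (a + m * a + m * b) * sinh (m * ((a - b) / 2)) ^ 2 := by
        rw [← hL, show (a * m - b * m) / 2 = m * ((a - b) / 2) by ring]; ring
    _ < 4 * exp (a + m * a + m * b) * (m * sinh ((a - b) / 2)) ^ 2 := by gcongr
    _ = _ := by rw [← hR]; ring

theorem Real.rpow_neg_one_add {x : ℝ} (hx : x ≠ 0) (y : ℝ) : x ^ (-1 + y) = x ^ y / x := by
  rw [neg_add_eq_sub, rpow_sub_one hx]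

theorem Real.rpow_neg_two_add {x : ℝ} (hx : x ≠ 0) (y : ℝ) : x ^ (-2 + y) = x ^ y / x ^ 2 := by
  simpa [neg_add_eq_sub] using rpow_sub_natCast hx y 2

theorem Real.pos_and_lt_rpow_one_div_of_rpow_lt {m t A : ℝ} (hm0 : 0 < m) (ht : 0 < t)
    (htA : t ^ m < A) : 0 < A ∧ t < A ^ (1 / m) := by
  have hA : 0 < A := (rpow_pos_of_pos ht m).trans htA
  exact ⟨hA, by rwa [one_div, lt_rpow_inv_iff_of_pos ht.le hA.le hm0]⟩

/- In the entries of the Wu metric, `A = 1 - |ẑ|²`, `s = |z_j|²` and `t = |z_1|²`: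
`h_{j j̄} = diagCoeff m A s t` and `h_{1 j̄} = offCoeff m t A · z̄_1 z_j`. -/
def diagCoeff (m A s t : ℝ) : ℝ :=
  A ^ (-2 + 1 / m) * t * s / (m ^ 2 * (A ^ (1 / m) - t) ^ 2) + (A + s) / (A * (A - t ^ m))

def diagCoeffDeriv (m A s t : ℝ) : ℝ :=
  A ^ (1 / m) * s * (A ^ (1 / m) + t) / (A ^ 2 * m ^ 2 * (A ^ (1 / m) - t) ^ 3) +
    m * (A + s) * t ^ (m - 1) / (A * (A - t ^ m) ^ 2)

def offCoeff (m t A : ℝ) : ℝ := A ^ (-1 + 1 / m) / (m * (A ^ (1 / m) - t) ^ 2)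

def offCoeffDeriv (m t A : ℝ) : ℝ :=
  A ^ (1 / m) / A ^ 2 * ((1 / m - 1) / (m * (A ^ (1 / m) - t) ^ 2) -
    2 * A ^ (1 / m) / (m ^ 2 * (A ^ (1 / m) - t) ^ 3))

section Coefficients

variable {m A s t : ℝ}

theorem hasDerivAt_diagCoeff (hm : m ≠ 0) (hA : A ≠ 0) (ht : t ≠ 0) (hD : A ^ (1 / m) - t ≠ 0)
    (hE : A - t ^ m ≠ 0) : HasDerivAt (diagCoeff m A s) (diagCoeffDeriv m A s t) t := by
  have hden : HasDerivAt (fun t => m ^ 2 * (A ^ (1 / m) - t) ^ 2)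
      (m ^ 2 * (2 * (A ^ (1 / m) - t) * -1)) t := by
    simpa using (((hasDerivAt_id t).const_sub (A ^ (1 / m))).pow 2).const_mul (m ^ 2)
  have h1 := ((hasDerivAt_id' t).const_mul (A ^ (-2 + 1 / m))).mul_const s |>.div hden
    (mul_ne_zero (pow_ne_zero 2 hm) (pow_ne_zero 2 hD))
  have h2 := (hasDerivAt_const t (A + s)).div
    (((hasDerivAt_rpow_const (p := m) (Or.inl ht)).const_sub A).const_mul A)
    (mul_ne_zero hA hE)
  refine (h1.add h2).congr_deriv ?_
  unfold diagCoeffDeriv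
  rw [rpow_neg_two_add hA]
  field_simp
  ring

theorem hasDerivAt_offCoeff (hm : m ≠ 0) (hA : 0 < A) (hD : A ^ (1 / m) - t ≠ 0) :
    HasDerivAt (offCoeff m t) (offCoeffDeriv m t A) A := by
  have hden : HasDerivAt (fun A => m * (A ^ (1 / m) - t) ^ 2)
      (m * (2 * (A ^ (1 / m) - t) * (1 / m * A ^ (1 / m - 1)))) A := by
    simpa using (((hasDerivAt_rpow_const (Or.inl hA.ne')).sub_const t).pow 2).const_mul m
  have h := (hasDerivAt_rpow_const (x := A) (p := -1 + 1 / m) (Or.inl hA.ne')).div hden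
    (mul_ne_zero hm (pow_ne_zero 2 hD))
  refine h.congr_deriv ?_
  unfold offCoeffDeriv
  rw [show -1 + 1 / m - 1 = -2 + 1 / m by ring, rpow_neg_two_add hA.ne', rpow_neg_one_add hA.ne',
    rpow_sub_one hA.ne']
  field_simp
  ring

theorem offCoeff_sub_mul_offCoeffDeriv_lt (hm0 : 0 < m) (hm1 : m < 1) (ht : 0 < t) (hs : 0 ≤ s)
    (htA : t ^ m < A) : offCoeff m t A - s * offCoeffDeriv m t A < diagCoeffDeriv m A s t := by
  obtain ⟨hA, htP⟩ := pos_and_lt_rpow_one_div_of_rpow_lt hm0 ht htA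
  have hPm : (A ^ (1 / m)) ^ m = A := by
    rw [← rpow_mul hA.le, one_div_mul_cancel hm0.ne', rpow_one]
  have key := mul_rpow_sub_rpow_sq_lt hm0 hm1 ht htP
  rw [hPm] at key
  unfold offCoeff offCoeffDeriv diagCoeffDeriv
  rw [rpow_neg_one_add hA.ne']
  set P := A ^ (1 / m)
  have hD : 0 < P - t := sub_pos.mpr htP
  have hE : 0 < A - t ^ m := sub_pos.mpr htA
  rw [← sub_pos]
  convert_to 0 < (A + s) * (m ^ 2 * t ^ (m - 1) * (P - t) ^ 2 * A - P * (A - t ^ m) ^ 2) /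
      (A ^ 2 * m * (P - t) ^ 2 * (A - t ^ m) ^ 2)
  · field_simp
    ring
  · exact div_pos (mul_pos (by positivity) (sub_pos.mpr key)) (by positivity)

end Coefficients

def wirtinger (g : ℂ → ℂ) (w : ℂ) : ℂ :=
  (1 / 2) * (fderiv ℝ g w 1 - Complex.I * fderiv ℝ g w Complex.I)

theorem wirtinger_of_hasFDerivAt {g : ℂ → ℂ} {g' : ℂ →L[ℝ] ℂ} {w : ℂ}
    (h : HasFDerivAt g g' w) :
    wirtinger g w = (1 / 2) * (g' 1 - Complex.I * g' Complex.I) := by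
  rw [wirtinger, h.fderiv]

theorem hasFDerivAt_ofReal_comp_norm_sq {φ : ℝ → ℝ} {d : ℝ} {w : ℂ}
    (hφ : HasDerivAt φ d (‖w‖ ^ 2)) :
    HasFDerivAt (fun w : ℂ => (φ (‖w‖ ^ 2) : ℂ))
      (Complex.ofRealCLM.comp (d • 2 • innerSL ℝ w)) w := by
  have := hφ.hasFDerivAt.comp w (hasStrictFDerivAt_norm_sq w).hasFDerivAt
  exact Complex.ofRealCLM.hasFDerivAt.comp w this |>.congr_fderiv (by ext v; simp; ring)

theorem wirtinger_ofReal_comp_norm_sq {φ : ℝ → ℝ} {d : ℝ} {w : ℂ}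
    (hφ : HasDerivAt φ d (‖w‖ ^ 2)) :
    wirtinger (fun w => (φ (‖w‖ ^ 2) : ℂ)) w = conj w * d := by
  rw [wirtinger_of_hasFDerivAt (hasFDerivAt_ofReal_comp_norm_sq hφ)]
  apply Complex.ext <;> simp [Complex.inner] <;> ring

theorem wirtinger_ofReal_comp_norm_sq_mul {ψ : ℝ → ℝ} {d : ℝ} {w : ℂ} (c : ℂ)
    (hψ : HasDerivAt ψ d (‖w‖ ^ 2)) :
    wirtinger (fun w => (ψ (‖w‖ ^ 2) : ℂ) * c * w) w =
      c * ((ψ (‖w‖ ^ 2) + ‖w‖ ^ 2 * d : ℝ) : ℂ) := by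
  have h : HasFDerivAt (fun w : ℂ => (ψ (‖w‖ ^ 2) : ℂ) * c * w) _ w :=
    ((hasFDerivAt_ofReal_comp_norm_sq hψ).mul_const c).fun_mul (hasFDerivAt_id w)
  rw [wirtinger_of_hasFDerivAt h]
  apply Complex.ext <;> simp [Complex.inner, Complex.sq_norm, Complex.normSq_apply] <;> ring

section WuMetric

variable {N : ℕ} {m : ℝ}

theorem wirt_eq_wirtinger_update {f : (Fin (N + 2) → ℂ) → ℂ} {z : Fin (N + 2) → ℂ}
    (k : Fin (N + 2)) (hf : DifferentiableAt ℝ f z) :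
    wirt N f z k = wirtinger (fun w => f (Function.update z k w)) (z k) := by
  have h : HasFDerivAt (fun w => f (Function.update z k w))
      ((fderiv ℝ f z).comp (.pi (Pi.single k (.id ℝ ℂ)))) (z k) := by
    have hz : HasFDerivAt f (fderiv ℝ f z) (Function.update z k (z k)) := by
      rw [Function.update_eq_self]
      exact hf.hasFDerivAt
    exact hz.comp _ (hasFDerivAt_update z (z k))
  have hsingle (v : ℂ) :
      ContinuousLinearMap.pi (Pi.single k (.id ℝ ℂ)) v = Pi.single (M := fun _ => ℂ) k v := by
    ext i
    rcases eq_or_ne i k with rfl | hi <;> simp [*]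
  simp only [wirt, wirtinger, h.fderiv, ContinuousLinearMap.comp_apply, hsingle]

def oneSubTailNormSq (N : ℕ) (u : Fin (N + 2) → ℂ) : ℝ :=
  1 - ∑ l ∈ Finset.Ioi (0 : Fin (N + 2)), ‖u l‖ ^ 2

theorem rpow_lt_oneSubTailNormSq_of_mem_E2m {z : Fin (N + 2) → ℂ} (hz : z ∈ E2m N m) :
    (‖z 0‖ ^ 2) ^ m < oneSubTailNormSq N z := by
  rw [oneSubTailNormSq, ← rpow_two, ← rpow_mul (norm_nonneg _)]
  exact lt_sub_iff_add_lt.mpr hz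

theorem oneSubTailNormSq_update_zero (z : Fin (N + 2) → ℂ) (w : ℂ) :
    oneSubTailNormSq N (Function.update z 0 w) = oneSubTailNormSq N z := by
  simp only [oneSubTailNormSq]
  congr 1
  refine Finset.sum_congr rfl fun l hl => ?_
  rw [Function.update_of_ne (Finset.mem_Ioi.mp hl).ne']

theorem oneSubTailNormSq_update_one (z : Fin (N + 2) → ℂ) (w : ℂ) :
    oneSubTailNormSq N (Function.update z 1 w) = oneSubTailNormSq N z + ‖z 1‖ ^ 2 - ‖w‖ ^ 2 := by
  have h1 : (1 : Fin (N + 2)) ∈ Finset.Ioi 0 := Finset.mem_Ioi.mpr Fin.zero_lt_one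
  simp only [oneSubTailNormSq, ← Finset.add_sum_erase _ _ h1, Function.update_self]
  rw [Finset.sum_congr rfl fun l hl => by rw [Function.update_of_ne (Finset.ne_of_mem_erase hl)]]
  ring

theorem hEnt_one_one (u : Fin (N + 2) → ℂ) :
    hEnt N m u 1 1 = diagCoeff m (oneSubTailNormSq N u) (‖u 1‖ ^ 2) (‖u 0‖ ^ 2) := by
  simp only [hEnt, diagCoeff, oneSubTailNormSq, one_ne_zero, if_false, if_true,
    rpow_mul (norm_nonneg _), rpow_two]

theorem hEnt_zero_one (u : Fin (N + 2) → ℂ) :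
    hEnt N m u 0 1 = offCoeff m (‖u 0‖ ^ 2) (oneSubTailNormSq N u) * conj (u 0) * u 1 := by
  simp [hEnt, offCoeff, oneSubTailNormSq]

theorem differentiableAt_norm_sq_apply (z : Fin (N + 2) → ℂ) (l : Fin (N + 2)) :
    DifferentiableAt ℝ (fun u : Fin (N + 2) → ℂ => ‖u l‖ ^ 2) z :=
  (differentiableAt_apply l z).norm_sq ℝ

theorem differentiableAt_oneSubTailNormSq (z : Fin (N + 2) → ℂ) :
    DifferentiableAt ℝ (oneSubTailNormSq N) z :=
  (DifferentiableAt.fun_sum fun l _ => differentiableAt_norm_sq_apply z l).const_sub 1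

variable {z : Fin (N + 2) → ℂ}

theorem differentiableAt_hEnt_one_one (hm : m ≠ 0) (hA : oneSubTailNormSq N z ≠ 0)
    (ht : ‖z 0‖ ^ 2 ≠ 0) (hD : oneSubTailNormSq N z ^ (1 / m) - ‖z 0‖ ^ 2 ≠ 0)
    (hE : oneSubTailNormSq N z - (‖z 0‖ ^ 2) ^ m ≠ 0) :
    DifferentiableAt ℝ (fun u => hEnt N m u 1 1) z := by
  have := differentiableAt_oneSubTailNormSq z
  have := differentiableAt_norm_sq_apply z 0
  have := differentiableAt_norm_sq_apply z 1
  have h : DifferentiableAt ℝ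
      (fun u => diagCoeff m (oneSubTailNormSq N u) (‖u 1‖ ^ 2) (‖u 0‖ ^ 2)) z := by
    unfold diagCoeff
    fun_prop (disch := first | assumption | positivity | simp [*])
  rw [funext hEnt_one_one]
  exact Complex.ofRealCLM.differentiableAt.comp z h

theorem differentiableAt_hEnt_zero_one (hm : m ≠ 0) (hA : oneSubTailNormSq N z ≠ 0)
    (hD : oneSubTailNormSq N z ^ (1 / m) - ‖z 0‖ ^ 2 ≠ 0) :
    DifferentiableAt ℝ (fun u => hEnt N m u 0 1) z := by
  have := differentiableAt_oneSubTailNormSq z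
  have := differentiableAt_norm_sq_apply z 0
  have h : DifferentiableAt ℝ (fun u => offCoeff m (‖u 0‖ ^ 2) (oneSubTailNormSq N u)) z := by
    unfold offCoeff
    fun_prop (disch := first | assumption | positivity | simp [*])
  rw [funext hEnt_zero_one]
  exact ((Complex.ofRealCLM.differentiableAt.comp z h).mul
    (Complex.conjCLE.differentiableAt.comp z (differentiableAt_apply 0 z))).mul
    (differentiableAt_apply 1 z)

theorem wirt_hEnt_one_one_zero (hm0 : 0 < m) (hz0 : z 0 ≠ 0)
    (htA : (‖z 0‖ ^ 2) ^ m < oneSubTailNormSq N z) :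
    wirt N (fun u => hEnt N m u 1 1) z 0 =
      conj (z 0) * diagCoeffDeriv m (oneSubTailNormSq N z) (‖z 1‖ ^ 2) (‖z 0‖ ^ 2) := by
  have ht : 0 < ‖z 0‖ ^ 2 := by positivity
  obtain ⟨hA, htP⟩ := pos_and_lt_rpow_one_div_of_rpow_lt hm0 ht htA
  have hD := (sub_pos.mpr htP).ne'
  have hE := (sub_pos.mpr htA).ne'
  have hslice : (fun w => hEnt N m (Function.update z 0 w) 1 1) =
      fun w => (diagCoeff m (oneSubTailNormSq N z) (‖z 1‖ ^ 2) (‖w‖ ^ 2) : ℂ) := by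
    funext w
    rw [hEnt_one_one, oneSubTailNormSq_update_zero, Function.update_self,
      Function.update_of_ne one_ne_zero]
  rw [wirt_eq_wirtinger_update 0 (differentiableAt_hEnt_one_one hm0.ne' hA.ne' ht.ne' hD hE),
    hslice]
  exact wirtinger_ofReal_comp_norm_sq (hasDerivAt_diagCoeff hm0.ne' hA.ne' ht.ne' hD hE)

theorem wirt_hEnt_zero_one_one (hm0 : 0 < m) (hz0 : z 0 ≠ 0)
    (htA : (‖z 0‖ ^ 2) ^ m < oneSubTailNormSq N z) :
    wirt N (fun u => hEnt N m u 0 1) z 1 =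
      conj (z 0) * ((offCoeff m (‖z 0‖ ^ 2) (oneSubTailNormSq N z) -
        ‖z 1‖ ^ 2 * offCoeffDeriv m (‖z 0‖ ^ 2) (oneSubTailNormSq N z) : ℝ) : ℂ) := by
  set A := oneSubTailNormSq N z
  have ht : 0 < ‖z 0‖ ^ 2 := by positivity
  obtain ⟨hA, htP⟩ := pos_and_lt_rpow_one_div_of_rpow_lt hm0 ht htA
  have hD := (sub_pos.mpr htP).ne'
  have hslice : (fun w => hEnt N m (Function.update z 1 w) 0 1) =
      fun w => (offCoeff m (‖z 0‖ ^ 2) (A + ‖z 1‖ ^ 2 - ‖w‖ ^ 2) : ℂ) * conj (z 0) * w := by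
    funext w
    rw [hEnt_zero_one, oneSubTailNormSq_update_one, Function.update_self,
      Function.update_of_ne zero_ne_one]
  have hψ : HasDerivAt (fun r => offCoeff m (‖z 0‖ ^ 2) (A + ‖z 1‖ ^ 2 - r))
      (offCoeffDeriv m (‖z 0‖ ^ 2) A * -1) (‖z 1‖ ^ 2) :=
    (hasDerivAt_offCoeff hm0.ne' hA hD).comp_of_eq _ ((hasDerivAt_id' _).const_sub _) (by ring)
  rw [wirt_eq_wirtinger_update 1 (differentiableAt_hEnt_zero_one hm0.ne' hA.ne' hD), hslice,
    wirtinger_ofReal_comp_norm_sq_mul _ hψ, add_sub_cancel_right]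
  push_cast
  ring

end WuMetric

/-- At every point of the dense open set `E_{2m} \ Z` the Wu metric `h` fails the Kähler
symmetry condition: there are indices `i, j, k` with
`∂h_{i j̄}/∂z_k ≠ ∂h_{k j̄}/∂z_i` (Wirtinger derivatives). Hence the Wu metric on
`E_{2m}` is nowhere Kähler. -/
theorem statement16 (N : ℕ) (m : ℝ) (hm0 : 0 < m) (hm : m < 1 / 2)
    (z : Fin (N + 2) → ℂ) (hz : z ∈ E2m N m) (hz0 : z 0 ≠ 0) :
    ∃ i j k : Fin (N + 2),
      wirt N (fun u => hEnt N m u i j) z k ≠ wirt N (fun u => hEnt N m u k j) z i := by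
  have htA := rpow_lt_oneSubTailNormSq_of_mem_E2m hz
  refine ⟨1, 1, 0, ?_⟩
  rw [wirt_hEnt_one_one_zero hm0 hz0 htA, wirt_hEnt_zero_one_one hm0 hz0 htA, Ne,
    mul_right_inj' ((map_ne_zero _).mpr hz0), Complex.ofReal_inj]
  exact (offCoeff_sub_mul_offCoeffDeriv_lt hm0 (by linarith) (by positivity) (by positivity)
    htA).ne'
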